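/- The automorphisms w and w^a := a⁻¹ w a of T commute, and the subgroup ⟨w, w^a⟩ of Aut T is isomorphic to the Klein four-group C2 × C2 (in particular it has order 4). -/

import Mathlib

universe u

namespace DicePaper

/-- Words of length `n` over the level-indexed sequence of alphabets `X`. -/
def Word (X : ℕ → Type u) : ℕ → Type u
  | 0 => PUnit
  | n + 1 => X 0 × Word (fun k => X (k + 1)) n

/-- An automorphism of the spherically homogeneous rooted tree with alphabets `X`,
encoded by its portrait: a permutation of the children alphabet at each vertex. -/
def TreeAut (X : ℕ → Type u) : Type u :=
  ∀ n, Word X n → Equiv.Perm (X n)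

namespace TreeAut

/-- The section (state) of a tree automorphism at a first-level vertex. -/
def sec {X : ℕ → Type u} (f : TreeAut X) (x : X 0) : TreeAut fun k => X (k + 1) :=
  fun n v => f (n + 1) (x, v)

/-- Action of a tree automorphism on the vertices (words). -/
def act : ∀ (X : ℕ → Type u), TreeAut X → ∀ n, Word X n → Word X n
  | _, _, 0, _ => PUnit.unit
  | X, f, n + 1, v => (f 0 PUnit.unit v.1, act (fun k => X (k + 1)) (f.sec v.1) n v.2)

/-- The inverse action on words. -/
def invAct : ∀ (X : ℕ → Type u), TreeAut X → ∀ n, Word X n → Word X n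
  | _, _, 0, _ => PUnit.unit
  | X, f, n + 1, v =>
    ((f 0 PUnit.unit)⁻¹ v.1,
      invAct (fun k => X (k + 1)) (f.sec ((f 0 PUnit.unit)⁻¹ v.1)) n v.2)

variable {X : ℕ → Type u}

instance : One (TreeAut X) := ⟨fun _ _ => 1⟩
instance : Mul (TreeAut X) := ⟨fun f g n v => f n (act X g n v) * g n v⟩
instance : Inv (TreeAut X) := ⟨fun f n v => (f n (invAct X f n v))⁻¹⟩

theorem one_apply (n : ℕ) (v : Word X n) : (1 : TreeAut X) n v = 1 := rfl
theorem mul_apply (f g : TreeAut X) (n : ℕ) (v : Word X n) :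
    (f * g) n v = f n (act X g n v) * g n v := rfl
theorem inv_apply (f : TreeAut X) (n : ℕ) (v : Word X n) :
    f⁻¹ n v = (f n (invAct X f n v))⁻¹ := rfl

theorem act_one : ∀ (n : ℕ) (X : ℕ → Type u) (v : Word X n), act X 1 n v = v
  | 0, _, _ => rfl
  | n + 1, X, v => by
    show ((1 : Equiv.Perm (X 0)) v.1, act _ (sec 1 v.1) n v.2) = v
    have : sec (1 : TreeAut X) v.1 = 1 := rfl
    rw [this, act_one n _ v.2]
    rfl

theorem sec_mul (f g : TreeAut X) (x : X 0) :
    sec (f * g) x = sec f (g 0 PUnit.unit x) * sec g x := rfl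

theorem act_mul : ∀ (n : ℕ) (X : ℕ → Type u) (f g : TreeAut X) (v : Word X n),
    act X (f * g) n v = act X f n (act X g n v)
  | 0, _, _, _, _ => rfl
  | n + 1, X, f, g, v => by
    show ((f * g) 0 PUnit.unit v.1, act _ (sec (f * g) v.1) n v.2) = _
    rw [sec_mul, act_mul n _ (sec f (g 0 PUnit.unit v.1)) (sec g v.1) v.2]
    rfl

theorem sec_inv (f : TreeAut X) (x : X 0) :
    sec f⁻¹ x = (sec f ((f 0 PUnit.unit)⁻¹ x))⁻¹ := by
  funext n v
  rfl

theorem act_invAct : ∀ (n : ℕ) (X : ℕ → Type u) (f : TreeAut X) (v : Word X n),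
    act X f n (invAct X f n v) = v
  | 0, _, _, _ => rfl
  | n + 1, X, f, v => by
    show (f 0 PUnit.unit ((f 0 PUnit.unit)⁻¹ v.1),
      act _ (sec f ((f 0 PUnit.unit)⁻¹ v.1)) n
        (invAct _ (sec f ((f 0 PUnit.unit)⁻¹ v.1)) n v.2)) = v
    rw [act_invAct n _ _ v.2]
    simp
    rfl

theorem invAct_act : ∀ (n : ℕ) (X : ℕ → Type u) (f : TreeAut X) (v : Word X n),
    invAct X f n (act X f n v) = v
  | 0, _, _, _ => rfl
  | n + 1, X, f, v => by
    show ((f 0 PUnit.unit)⁻¹ (f 0 PUnit.unit v.1),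
      invAct _ (sec f ((f 0 PUnit.unit)⁻¹ (f 0 PUnit.unit v.1))) n
        (act _ (sec f v.1) n v.2)) = v
    have h : (f 0 PUnit.unit)⁻¹ (f 0 PUnit.unit v.1) = v.1 := by simp
    rw [h, invAct_act n _ _ v.2]
    rfl

instance : Group (TreeAut X) where
  mul_assoc f g h := by
    funext n v
    show (f n (act X g n (act X h n v)) * g n (act X h n v)) * h n v
        = f n (act X (g * h) n v) * (g n (act X h n v) * h n v)
    rw [act_mul]
    exact mul_assoc _ _ _
  one_mul f := by
    funext n v
    show (1 : TreeAut X) n (act X f n v) * f n v = f n v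
    rw [one_apply, one_mul]
  mul_one f := by
    funext n v
    show f n (act X 1 n v) * (1 : TreeAut X) n v = f n v
    rw [act_one, one_apply, mul_one]
  inv_mul_cancel f := by
    funext n v
    show f⁻¹ n (act X f n v) * f n v = 1
    rw [inv_apply, invAct_act, inv_mul_cancel]

end TreeAut



/-- The alphabet `X = {0,…,7}` identified with `(ℤ/2)³` via binary digits. -/
abbrev V : Type := ZMod 2 × ZMod 2 × ZMod 2

/-- The rooted automorphism of the regular rooted tree over `V` determined by a
permutation of the alphabet: it permutes the first letter of every word. -/
def rooted (σ : Equiv.Perm V) : TreeAut fun _ => V :=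
  fun n _ => match n with
  | 0 => σ
  | _ + 1 => 1

/-- The rooted automorphism `a` (adding `1`, i.e. flipping the first binary digit). -/
def aAut : TreeAut fun _ => V := rooted (Equiv.addLeft ((1, 0, 0) : V))

/-- The rooted automorphism `b` (adding `2`, i.e. flipping the second binary digit). -/
def bAut : TreeAut fun _ => V := rooted (Equiv.addLeft ((0, 1, 0) : V))

/-- The rooted automorphism `c` (adding `4`, i.e. flipping the third binary digit). -/
def cAut : TreeAut fun _ => V := rooted (Equiv.addLeft ((0, 0, 1) : V))

/-- The portrait of the directed automorphism `w`: its first-level sections are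
`w` at `0`, `a` at `3 = (1,1,0)`, `b` at `5 = (1,0,1)`, `c` at `6 = (0,1,1)`,
and trivial elsewhere; `w` fixes the first level. -/
def wPerm : ∀ n, Word (fun _ => V) n → Equiv.Perm V
  | 0, _ => 1
  | n + 1, v =>
    if v.1 = (0 : V) then wPerm n v.2
    else
      match n with
      | 0 =>
        if v.1 = ((1, 1, 0) : V) then Equiv.addLeft ((1, 0, 0) : V)
        else if v.1 = ((1, 0, 1) : V) then Equiv.addLeft ((0, 1, 0) : V)
        else if v.1 = ((0, 1, 1) : V) then Equiv.addLeft ((0, 0, 1) : V)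
        else 1
      | _ + 1 => 1

/-- The directed automorphism `w` with `w = (w, 1, 1, a, 1, b, c, 1)`. -/
def wAut : TreeAut fun _ => V := fun n v => wPerm n v

/-- For `k ∈ X`, the unique element `h_k` of `H = ⟨a,b,c⟩` with `h_k(0) = k`,
as a rooted automorphism of the tree. -/
def hA (k : V) : TreeAut fun _ => V := rooted (Equiv.addLeft k)

/-- The conjugates `w_k := h_k⁻¹ w h_k`, `k ∈ X`. -/
def wk (k : V) : TreeAut fun _ => V := (hA k)⁻¹ * wAut * hA k

/-- The red tetrahedron `{0, 3, 5, 6}`. -/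
def red : Set V := {(0, 0, 0), (1, 1, 0), (1, 0, 1), (0, 1, 1)}

/-- The black tetrahedron `{1, 2, 4, 7}`. -/
def black : Set V := {(1, 0, 0), (0, 1, 0), (0, 0, 1), (1, 1, 1)}

end DicePaper

namespace DicePaper
open TreeAut

lemma wPerm_zero (n : ℕ) (v2 : Word (fun _ => V) n) :
    wPerm (n+1) ((0 : V), v2) = wPerm n v2 := by simp [wPerm]

lemma wPerm_ne {x : V} (h : x ≠ 0) (n : ℕ) (v2 v2' : Word (fun _ => V) n) :
    wPerm (n+1) (x, v2) = wPerm (n+1) (x, v2') := by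
  cases n <;> simp [wPerm, h]

lemma wPerm_k (n : ℕ) (v2 : Word (fun _ => V) n) :
    wPerm (n+1) (((1,0,0) : V), v2) = 1 := by
  cases n <;> simp (config := { decide := true }) [wPerm]

lemma sec_w_zero : TreeAut.sec wAut (0 : V) = wAut := by
  funext n v; exact wPerm_zero n v

lemma sec_w_k : TreeAut.sec wAut ((1,0,0) : V) = 1 := by
  funext n v; exact wPerm_k n v

/-- The conjugate `w^a` as an explicit portrait. -/
def uPerm : ∀ n, Word (fun _ => V) n → Equiv.Perm V
  | 0, _ => 1
  | n+1, v => wPerm (n+1) (((1,0,0) : V) + v.1, v.2)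

def uAut : TreeAut fun _ => V := fun n v => uPerm n v

lemma sec_u_zero : TreeAut.sec uAut (0 : V) = 1 := by
  funext n v
  show wPerm (n+1) (((1,0,0):V) + 0, v) = 1
  rw [add_zero]; exact wPerm_k n v

lemma sec_u_k : TreeAut.sec uAut ((1,0,0) : V) = wAut := by
  funext n v
  show wPerm (n+1) (((1,0,0):V) + (1,0,0), v) = wAut n v
  rw [show ((1,0,0):V) + (1,0,0) = 0 from by decide, wPerm_zero]
  rfl

lemma vadd_self (z : V) : z + z = 0 := by revert z; decide

lemma addLeft_invol (z : V) : Equiv.addLeft z * Equiv.addLeft z = 1 := by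
  apply Equiv.ext; intro t
  simp [Equiv.Perm.mul_apply, ← add_assoc, vadd_self]

lemma addLeft_swap (z w : V) :
    Equiv.addLeft z * Equiv.addLeft w = Equiv.addLeft w * Equiv.addLeft z := by
  apply Equiv.ext; intro t
  simp [Equiv.Perm.mul_apply, add_left_comm]

lemma one_eq_addLeft_zero : (1 : Equiv.Perm V) = Equiv.addLeft (0 : V) := by
  apply Equiv.ext; intro t; simp

lemma exists_addLeft : ∀ (n : ℕ) (v : Word (fun _ => V) n),
    ∃ z : V, wPerm n v = Equiv.addLeft z
  | 0, _ => ⟨0, one_eq_addLeft_zero⟩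
  | n+1, ⟨x, v2⟩ => by
    by_cases h : x = 0
    · subst h
      rw [wPerm_zero]
      exact exists_addLeft n v2
    · cases n with
      | zero =>
        simp only [wPerm]
        rw [if_neg h]
        split_ifs with h1 h2 h3
        · exact ⟨_, rfl⟩
        · exact ⟨_, rfl⟩
        · exact ⟨_, rfl⟩
        · exact ⟨0, one_eq_addLeft_zero⟩
      | succ m =>
        refine ⟨0, ?_⟩
        rw [show wPerm (m+1+1) (x, v2) = 1 from by simp [wPerm, h]]
        exact one_eq_addLeft_zero

lemma wPerm_sq (n : ℕ) (v : Word (fun _ => V) n) : wPerm n v * wPerm n v = 1 := by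
  obtain ⟨z, hz⟩ := exists_addLeft n v
  rw [hz]; exact addLeft_invol z

lemma comm_pt (n : ℕ) (v : Word (fun _ => V) n) :
    wPerm n v * uPerm n v = uPerm n v * wPerm n v := by
  cases n with
  | zero => rfl
  | succ n =>
    obtain ⟨zw, hw⟩ := exists_addLeft (n+1) v
    obtain ⟨zu, hu⟩ := exists_addLeft (n+1) ((((1,0,0):V)) + v.1, v.2)
    show wPerm (n+1) v * wPerm (n+1) ((((1,0,0):V)) + v.1, v.2)
        = wPerm (n+1) ((((1,0,0):V)) + v.1, v.2) * wPerm (n+1) v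
    rw [hw, hu]
    exact addLeft_swap _ _

lemma add_k_ne {x : V} (h : x ≠ ((1,0,0):V)) : ((1,0,0):V) + x ≠ 0 := by
  intro hc
  apply h
  have h2 : ((1,0,0):V) + (((1,0,0):V) + x) = ((1,0,0):V) + 0 := congrArg _ hc
  rw [← add_assoc, show ((1,0,0):V) + (1,0,0) = 0 from by decide, zero_add, add_zero] at h2
  exact h2

lemma wPerm_act_w : ∀ (n : ℕ) (v : Word (fun _ => V) n),
    wPerm n (TreeAut.act (fun _ => V) wAut n v) = wPerm n v
  | 0, _ => rfl
  | n+1, ⟨x, v2⟩ => by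
    show wPerm (n+1) (x, TreeAut.act (fun _ => V) (TreeAut.sec wAut x) n v2)
        = wPerm (n+1) (x, v2)
    by_cases h : x = 0
    · subst h
      rw [sec_w_zero, wPerm_zero, wPerm_zero]
      exact wPerm_act_w n v2
    · exact wPerm_ne h n _ _

lemma wPerm_act_u : ∀ (n : ℕ) (v : Word (fun _ => V) n),
    wPerm n (TreeAut.act (fun _ => V) uAut n v) = wPerm n v
  | 0, _ => rfl
  | n+1, ⟨x, v2⟩ => by
    show wPerm (n+1) (x, TreeAut.act (fun _ => V) (TreeAut.sec uAut x) n v2)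
        = wPerm (n+1) (x, v2)
    by_cases h : x = 0
    · subst h
      rw [sec_u_zero, TreeAut.act_one]
    · exact wPerm_ne h n _ _

lemma uPerm_act_w : ∀ (n : ℕ) (v : Word (fun _ => V) n),
    uPerm n (TreeAut.act (fun _ => V) wAut n v) = uPerm n v
  | 0, _ => rfl
  | n+1, ⟨x, v2⟩ => by
    show wPerm (n+1) (((1,0,0):V) + x, TreeAut.act (fun _ => V) (TreeAut.sec wAut x) n v2)
        = wPerm (n+1) (((1,0,0):V) + x, v2)
    by_cases h : x = ((1,0,0):V)
    · subst h
      rw [sec_w_k, TreeAut.act_one]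
    · exact wPerm_ne (add_k_ne h) n _ _

lemma wAut_sq : wAut * wAut = 1 := by
  funext n v
  show wPerm n (TreeAut.act (fun _ => V) wAut n v) * wPerm n v = 1
  rw [wPerm_act_w]; exact wPerm_sq n v

lemma wu_comm : wAut * uAut = uAut * wAut := by
  funext n v
  show wPerm n (TreeAut.act (fun _ => V) uAut n v) * uPerm n v
      = uPerm n (TreeAut.act (fun _ => V) wAut n v) * wPerm n v
  rw [wPerm_act_u, uPerm_act_w]
  exact comm_pt n v

lemma rooted_inv (σ : Equiv.Perm V) : (rooted σ)⁻¹ = rooted σ⁻¹ := by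
  funext n v
  cases n <;> rfl

lemma act_rooted (σ : Equiv.Perm V) (n : ℕ) (v : Word (fun _ => V) (n+1)) :
    TreeAut.act (fun _ => V) (rooted σ) (n+1) v = (σ v.1, v.2) := by
  show (σ v.1, TreeAut.act (fun _ => V) (TreeAut.sec (rooted σ) v.1) n v.2) = (σ v.1, v.2)
  rw [show TreeAut.sec (rooted σ) v.1 = 1 from rfl, TreeAut.act_one]

lemma uAut_eq : aAut⁻¹ * wAut * aAut = uAut := by
  rw [show aAut = rooted (Equiv.addLeft ((1,0,0):V)) from rfl, rooted_inv]
  funext n v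
  cases n with
  | zero =>
    show ((Equiv.addLeft ((1,0,0):V))⁻¹ * 1) * Equiv.addLeft ((1,0,0):V) = 1
    group
  | succ n =>
    show (rooted (Equiv.addLeft ((1,0,0):V))⁻¹ * wAut) (n+1)
        (TreeAut.act (fun _ => V) (rooted (Equiv.addLeft ((1,0,0):V))) (n+1) v)
        * rooted (Equiv.addLeft ((1,0,0):V)) (n+1) v = uPerm (n+1) v
    rw [act_rooted]
    show (1 * wPerm (n+1) (Equiv.addLeft ((1,0,0):V) v.1, v.2)) * 1 = uPerm (n+1) v
    rw [one_mul, mul_one]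
    rfl

lemma uAut_sq : uAut * uAut = 1 := by
  rw [← uAut_eq]
  have : (aAut⁻¹ * wAut * aAut) * (aAut⁻¹ * wAut * aAut)
      = aAut⁻¹ * (wAut * wAut) * aAut := by group
  rw [this, wAut_sq]
  group

lemma addLeft_ne_one : Equiv.addLeft ((1,0,0):V) ≠ 1 := by
  intro h
  have : ((1,0,0):V) + 0 = (0:V) := congrArg (fun e : Equiv.Perm V => e 0) h
  exact absurd this (by decide)

lemma wPerm_eval : wPerm 1 ((((1,1,0):V)), PUnit.unit) = Equiv.addLeft ((1,0,0):V) := by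
  simp (config := { decide := true }) [wPerm]

lemma uAut_eval1 : uPerm 1 ((((1,1,0):V)), PUnit.unit) = 1 := by
  show wPerm 1 (((1,0,0):V) + (1,1,0), PUnit.unit) = 1
  rw [show ((1,0,0):V) + (1,1,0) = (0,1,0) from by decide]
  simp (config := { decide := true }) [wPerm]

lemma uAut_eval2 : uPerm 1 ((((0,1,0):V)), PUnit.unit) = Equiv.addLeft ((1,0,0):V) := by
  show wPerm 1 (((1,0,0):V) + (0,1,0), PUnit.unit) = _
  rw [show ((1,0,0):V) + (0,1,0) = (1,1,0) from by decide]
  exact wPerm_eval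

lemma wAut_ne_one : wAut ≠ 1 := by
  intro h
  have h1 := congrFun (congrFun h 1) ((((1,1,0):V)), PUnit.unit)
  rw [show wAut 1 ((((1,1,0):V)), PUnit.unit) = Equiv.addLeft ((1,0,0):V) from wPerm_eval] at h1
  exact addLeft_ne_one h1

lemma uAut_ne_one : uAut ≠ 1 := by
  intro h
  have h1 := congrFun (congrFun h 1) ((((0,1,0):V)), PUnit.unit)
  rw [show uAut 1 ((((0,1,0):V)), PUnit.unit) = Equiv.addLeft ((1,0,0):V) from uAut_eval2] at h1
  exact addLeft_ne_one h1

lemma wAut_ne_uAut : wAut ≠ uAut := by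
  intro h
  have h1 := congrFun (congrFun h 1) ((((1,1,0):V)), PUnit.unit)
  rw [show wAut 1 ((((1,1,0):V)), PUnit.unit) = Equiv.addLeft ((1,0,0):V) from wPerm_eval,
    show uAut 1 ((((1,1,0):V)), PUnit.unit) = 1 from uAut_eval1] at h1
  exact addLeft_ne_one h1

lemma wu_ne_one : wAut * uAut ≠ 1 := by
  intro h
  apply wAut_ne_uAut
  have h1 : wAut = uAut⁻¹ := eq_inv_of_mul_eq_one_left h
  rw [h1, inv_eq_of_mul_eq_one_left uAut_sq]

/-- `g^x` for `x : ZMod 2`. -/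
def pw (g : TreeAut fun _ => V) (x : ZMod 2) : TreeAut fun _ => V :=
  if x = 0 then 1 else g

lemma zmod2_cases (x : ZMod 2) : x = 0 ∨ x = 1 := by revert x; decide

def phi : Multiplicative (ZMod 2 × ZMod 2) →* (TreeAut fun _ => V) where
  toFun p := pw wAut p.toAdd.1 * pw uAut p.toAdd.2
  map_one' := by simp [pw]
  map_mul' p q := by
    have hWW : ∀ x, wAut * (wAut * x) = x := fun x => by
      rw [← mul_assoc, wAut_sq, one_mul]
    have hUU : ∀ x, uAut * (uAut * x) = x := fun x => by
      rw [← mul_assoc, uAut_sq, one_mul]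
    have hUWx : ∀ x, uAut * (wAut * x) = wAut * (uAut * x) := fun x => by
      rw [← mul_assoc, ← wu_comm, mul_assoc]
    have hUW : uAut * wAut = wAut * uAut := wu_comm.symm
    rcases zmod2_cases p.toAdd.1 with h1 | h1 <;>
    rcases zmod2_cases p.toAdd.2 with h2 | h2 <;>
    rcases zmod2_cases q.toAdd.1 with h3 | h3 <;>
    rcases zmod2_cases q.toAdd.2 with h4 | h4 <;>
      simp [pw, toAdd_mul, Prod.fst_add, Prod.snd_add, h1, h2, h3, h4,
        show (1:ZMod 2) ≠ 0 from by decide, show ((1:ZMod 2) + 1) = 0 from by decide,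
        wAut_sq, uAut_sq, hWW, hUU, hUWx, hUW, mul_assoc]

lemma phi_apply (p : Multiplicative (ZMod 2 × ZMod 2)) :
    phi p = pw wAut p.toAdd.1 * pw uAut p.toAdd.2 := rfl

lemma phi_inj : Function.Injective phi := by
  rw [injective_iff_map_eq_one]
  intro p hp
  rw [phi_apply] at hp
  rcases zmod2_cases p.toAdd.1 with h1 | h1 <;> rcases zmod2_cases p.toAdd.2 with h2 | h2
  · have : p.toAdd = (0 : ZMod 2 × ZMod 2) := Prod.ext h1 h2
    exact Multiplicative.toAdd.injective (this.trans rfl)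
  · exfalso
    rw [h1, h2] at hp
    simp [pw, show (1:ZMod 2) ≠ 0 from by decide] at hp
    exact uAut_ne_one hp
  · exfalso
    rw [h1, h2] at hp
    simp [pw, show (1:ZMod 2) ≠ 0 from by decide] at hp
    exact wAut_ne_one hp
  · exfalso
    rw [h1, h2] at hp
    simp [pw, show (1:ZMod 2) ≠ 0 from by decide] at hp
    exact wu_ne_one hp

lemma phi_range : phi.range = Subgroup.closure {wAut, aAut⁻¹ * wAut * aAut} := by
  rw [uAut_eq]
  apply le_antisymm
  · rintro x ⟨p, rfl⟩
    rw [phi_apply]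
    apply mul_mem
    · unfold pw; split
      · exact one_mem _
      · exact Subgroup.subset_closure (by simp)
    · unfold pw; split
      · exact one_mem _
      · exact Subgroup.subset_closure (by simp)
  · rw [Subgroup.closure_le]
    rintro x hx
    simp only [Set.mem_insert_iff, Set.mem_singleton_iff] at hx
    rcases hx with rfl | rfl
    · exact ⟨Multiplicative.ofAdd ((1, 0) : ZMod 2 × ZMod 2), by
        rw [phi_apply]; simp [pw, show (1:ZMod 2) ≠ 0 from by decide]⟩
    · exact ⟨Multiplicative.ofAdd ((0, 1) : ZMod 2 × ZMod 2), by
        rw [phi_apply]; simp [pw, show (1:ZMod 2) ≠ 0 from by decide]⟩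

end DicePaper

open DicePaper in
/-- `w` and `w^a = a⁻¹ w a` commute, and `⟨w, w^a⟩` is isomorphic to the
Klein four-group `C2 × C2`; in particular it has order 4. -/
theorem stmt1 :
    Commute wAut (aAut⁻¹ * wAut * aAut) ∧
    Nonempty ((Subgroup.closure {wAut, aAut⁻¹ * wAut * aAut} :
        Subgroup (TreeAut fun _ => V)) ≃* Multiplicative (ZMod 2 × ZMod 2)) ∧
    Nat.card (Subgroup.closure {wAut, aAut⁻¹ * wAut * aAut} :
        Subgroup (TreeAut fun _ => V)) = 4 := by
  refine ⟨?_, ⟨?_⟩, ?_⟩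
  · show wAut * (aAut⁻¹ * wAut * aAut) = (aAut⁻¹ * wAut * aAut) * wAut
    rw [uAut_eq, wu_comm]
  · exact (MulEquiv.subgroupCongr phi_range.symm).trans (MonoidHom.ofInjective phi_inj).symm
  · have e := (MulEquiv.subgroupCongr phi_range.symm).trans (MonoidHom.ofInjective phi_inj).symm
    rw [Nat.card_congr e.toEquiv]
    simp [Nat.card_prod]
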